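/- arXiv:1505.04073 — 2 statements merged into one kernel-verified Lean document; each statement's English description precedes it below -/
import Mathlib

section
/- Let F be a nonempty closed convex subset of a real Hilbert space with 0 ∈ F, y a point, 0 < λ < λ_0, θ₀ = P_F(y/λ_0), θ* = P_F(y/λ). Let n be any nonzero vector with P_F(θ₀ + t·n) = θ₀ for all t ≥ 0, set r = y/λ − θ₀ and r⊥ = r − (⟨n, r⟩/‖n‖²)·n, and assume ⟨r, n⟩ ≥ 0. Then ‖θ* − (θ₀ + ½ r⊥)‖ ≤ ½ ‖r⊥‖. -/
/-!
Write `u = θ* - θ₀` and `a = ⟪n, r⟫ / ‖n‖²`, so that `u - r⊥ = (θ* - y/λ) + a n`. The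
variational inequality for `θ* = P_F(y/λ)`, tested at `θ₀`, and the one for `θ₀ = P_F(θ₀ + n)`,
tested at `θ*`, make both `⟪u, θ* - y/λ⟫` and `a ⟪u, n⟫` nonpositive (the latter since `a ≥ 0`).
Hence `⟪u, u - r⊥⟫ ≤ 0`: the segment `[θ₀, θ₀ + r⊥]` is seen from `θ*` under an obtuse angle,
so `θ*` lies in the ball with that segment as diameter.
-/

open RealInnerProductSpace

section

variable {H : Type*} [NormedAddCommGroup H] [InnerProductSpace ℝ H]

theorem real_inner_sub_nonpos_of_forall_norm_sub_le {K : Set H} (hK : Convex ℝ K) {u v w : H}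
    (hv : v ∈ K) (hmin : ∀ x ∈ K, ‖u - v‖ ≤ ‖u - x‖) (hw : w ∈ K) : ⟪u - v, w - v⟫ ≤ 0 := by
  have : Nonempty K := ⟨⟨v, hv⟩⟩
  have hinf : ‖u - v‖ = ⨅ x : K, ‖u - x‖ :=
    le_antisymm (le_ciInf fun x => hmin x x.2)
      (ciInf_le ⟨0, by rintro _ ⟨x, rfl⟩; exact norm_nonneg (u - x)⟩ (⟨v, hv⟩ : K))
  exact (norm_eq_iInf_iff_real_inner_le_zero hK hv).mp hinf w hw

theorem norm_sub_half_smul_le_iff_real_inner_sub_nonpos (u c : H) :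
    ‖u - (1 / 2 : ℝ) • c‖ ≤ 1 / 2 * ‖c‖ ↔ ⟪u, u - c⟫ ≤ 0 := by
  have hsq : ‖u - (1 / 2 : ℝ) • c‖ ^ 2 = ⟪u, u - c⟫ + (1 / 2 * ‖c‖) ^ 2 := by
    rw [norm_sub_sq_real, inner_sub_right, real_inner_smul_right, norm_smul,
      real_inner_self_eq_norm_sq, Real.norm_of_nonneg (by norm_num)]
    ring
  rw [← sq_le_sq₀ (norm_nonneg _) (by positivity), hsq]
  constructor <;> intro h <;> linarith

end

theorem dual_optimum_in_ball_general {H : Type*} [NormedAddCommGroup H]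
    [InnerProductSpace ℝ H]
    (F : Set H) (hconv : Convex ℝ F)
    (y : H) (lam : ℝ)
    (θ₀ θstar n : H) (hθ₀F : θ₀ ∈ F) (hθstarF : θstar ∈ F)
    (hncone : ∀ t : ℝ, 0 ≤ t →
      ∀ x ∈ F, ‖(θ₀ + t • n) - θ₀‖ ≤ ‖(θ₀ + t • n) - x‖)
    (hprojstar : ∀ x ∈ F, ‖lam⁻¹ • y - θstar‖ ≤ ‖lam⁻¹ • y - x‖)
    (r rperp : H)
    (hr : r = lam⁻¹ • y - θ₀)
    (hrperp : rperp = r - (⟪n, r⟫ / ‖n‖ ^ 2) • n)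
    (hrn : 0 ≤ ⟪r, n⟫) :
    ‖θstar - (θ₀ + (1 / 2 : ℝ) • rperp)‖ ≤ (1 / 2) * ‖rperp‖ := by
  set a : ℝ := ⟪n, r⟫ / ‖n‖ ^ 2
  have ha : 0 ≤ a := div_nonneg (real_inner_comm r n ▸ hrn) (by positivity)
  have hstar : ⟪lam⁻¹ • y - θstar, θ₀ - θstar⟫ ≤ 0 :=
    real_inner_sub_nonpos_of_forall_norm_sub_le hconv hθstarF hprojstar hθ₀F
  have hnormal : ⟪n, θstar - θ₀⟫ ≤ 0 := by
    simpa using real_inner_sub_nonpos_of_forall_norm_sub_le hconv hθ₀F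
      (hncone 1 zero_le_one) hθstarF
  rw [show θstar - (θ₀ + (1 / 2 : ℝ) • rperp) = (θstar - θ₀) - (1 / 2 : ℝ) • rperp by abel,
    norm_sub_half_smul_le_iff_real_inner_sub_nonpos]
  calc ⟪θstar - θ₀, θstar - θ₀ - rperp⟫
      = ⟪lam⁻¹ • y - θstar, θ₀ - θstar⟫ + a * ⟪n, θstar - θ₀⟫ := by
        rw [hrperp, hr, show θstar - θ₀ - (lam⁻¹ • y - θ₀ - a • n)
            = a • n - (lam⁻¹ • y - θstar) by abel,
          inner_sub_right, real_inner_smul_right, real_inner_comm n, ← neg_sub θstar θ₀,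
          inner_neg_right, real_inner_comm (lam⁻¹ • y - θstar)]
        ring
    _ ≤ 0 := add_nonpos hstar (mul_nonpos_of_nonneg_of_nonpos ha hnormal)

/-- Part 4 of the dual-estimation theorem: the dual optimum `θ* = P_F(y/λ)` lies in
the ball of center `θ₀ + r⊥/2` and radius `‖r⊥‖/2`, where `θ₀ = P_F(y/λ₀)`, `n` is a
nonzero vector in the normal cone to `F` at `θ₀` (in the sense that
`P_F(θ₀ + t n) = θ₀` for all `t ≥ 0`), `r = y/λ - θ₀`,
`r⊥ = r - (⟪n, r⟫ / ‖n‖²) n`, and `⟪r, n⟫ ≥ 0`. -/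
theorem dual_optimum_in_ball {H : Type*} [NormedAddCommGroup H]
    [InnerProductSpace ℝ H] [CompleteSpace H]
    (F : Set H) (hne : F.Nonempty) (hF : IsClosed F) (hconv : Convex ℝ F)
    (h0 : (0 : H) ∈ F) (y : H) (lam lam₀ : ℝ) (hlam : 0 < lam) (hlt : lam < lam₀)
    (θ₀ θstar n : H) (hθ₀F : θ₀ ∈ F) (hθstarF : θstar ∈ F)
    (hn : n ≠ 0)
    (hncone : ∀ t : ℝ, 0 ≤ t →
      ∀ x ∈ F, ‖(θ₀ + t • n) - θ₀‖ ≤ ‖(θ₀ + t • n) - x‖)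
    (hprojstar : ∀ x ∈ F, ‖lam⁻¹ • y - θstar‖ ≤ ‖lam⁻¹ • y - x‖)
    (r rperp : H)
    (hr : r = lam⁻¹ • y - θ₀)
    (hrperp : rperp = r - (⟪n, r⟫ / ‖n‖ ^ 2) • n)
    (hrn : 0 ≤ ⟪r, n⟫) :
    ‖θstar - (θ₀ + (1 / 2 : ℝ) • rperp)‖ ≤ (1 / 2) * ‖rperp‖ :=
  dual_optimum_in_ball_general F hconv y lam θ₀ θstar n hθ₀F hθstarF hncone hprojstar r rperp hr
    hrperp hrn
end

section
/- Let H ∈ ℝ^{T×T} be symmetric, q ∈ ℝ^T, Δ > 0, and suppose u* ∈ ℝ^T and α* ≥ 0 satisfy: H + α*I is positive semidefinite, (H + α*I)u* = −q, and ‖u*‖ ≤ Δ with ‖u*‖ = Δ if α* > 0. Then u* minimizes ψ(u) = ½ uᵀHu + qᵀu over the ball {u : ‖u‖ ≤ Δ}. -/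
open RealInnerProductSpace Matrix

/-!
With `A = H + α* I` and `A u* = -q`, completing the square gives
`ψ(u) - ψ(u*) = ½ (u - u*)ᵀ A (u - u*) + (α*/2) (‖u*‖² - ‖u‖²)`.
The first term is nonnegative since `A` is positive semidefinite, the second by complementary
slackness: either `α* = 0`, or `‖u*‖ = Δ ≥ ‖u‖`.
-/

namespace Matrix

variable {n R : Type*} [Fintype n] [CommRing R]

theorem IsSymm.dotProduct_mulVec_sub_self_of_mulVec_eq_neg {A : Matrix n n R} (hA : A.IsSymm)
    {x q : n → R} (hx : A *ᵥ x = -q) (u : n → R) :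
    (u - x) ⬝ᵥ A *ᵥ (u - x) = u ⬝ᵥ A *ᵥ u + 2 * (q ⬝ᵥ u) - (x ⬝ᵥ A *ᵥ x + 2 * (q ⬝ᵥ x)) := by
  have hxu : x ⬝ᵥ A *ᵥ u = u ⬝ᵥ A *ᵥ x := by
    rw [dotProduct_mulVec, ← mulVec_transpose, hA.eq, dotProduct_comm]
  simp only [mulVec_sub, dotProduct_sub, sub_dotProduct, hxu, hx, dotProduct_neg,
    dotProduct_comm q]
  ring

theorem dotProduct_mulVec_add_smul_one [DecidableEq n] (A : Matrix n n R) (α : R) (u : n → R) :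
    u ⬝ᵥ (A + α • 1) *ᵥ u = u ⬝ᵥ A *ᵥ u + α * (u ⬝ᵥ u) := by
  simp only [add_mulVec, smul_mulVec, one_mulVec, dotProduct_add, dotProduct_smul, smul_eq_mul]

theorem quadratic_le_of_posSemidef_add_smul_one [DecidableEq n] {M : Matrix n n ℝ} {α : ℝ}
    {q x : n → ℝ} (hpsd : (M + α • 1).PosSemidef) (hx : (M + α • 1) *ᵥ x = -q) {u : n → ℝ}
    (hα : α * (u ⬝ᵥ u) ≤ α * (x ⬝ᵥ x)) :
    1 / 2 * (x ⬝ᵥ M *ᵥ x) + q ⬝ᵥ x ≤ 1 / 2 * (u ⬝ᵥ M *ᵥ u) + q ⬝ᵥ u := by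
  have hsymm : (M + α • 1).IsSymm := isHermitian_iff_isSymm.mp hpsd.isHermitian
  have hsq := hpsd.dotProduct_mulVec_nonneg (u - x)
  rw [star_trivial, hsymm.dotProduct_mulVec_sub_self_of_mulVec_eq_neg hx,
    dotProduct_mulVec_add_smul_one, dotProduct_mulVec_add_smul_one] at hsq
  linarith

end Matrix

theorem EuclideanSpace.real_norm_sq_eq_dotProduct {n : Type*} [Fintype n]
    (u : EuclideanSpace ℝ n) : ‖u‖ ^ 2 = u ⬝ᵥ u := by
  rw [← real_inner_self_eq_norm_sq, EuclideanSpace.inner_eq_star_dotProduct, star_trivial]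

theorem trust_region_sufficiency_general {T : ℕ} (M : Matrix (Fin T) (Fin T) ℝ)
    (q : EuclideanSpace ℝ (Fin T)) (Δ : ℝ)
    (ustar : EuclideanSpace ℝ (Fin T)) (αstar : ℝ) (hα : 0 ≤ αstar)
    (hpsd : (M + αstar • (1 : Matrix (Fin T) (Fin T) ℝ)).PosSemidef)
    (heq : (M + αstar • (1 : Matrix (Fin T) (Fin T) ℝ)).mulVec ustar = -q)
    (hbdry : 0 < αstar → ‖ustar‖ = Δ) :
    ∀ u : EuclideanSpace ℝ (Fin T), ‖u‖ ≤ Δ →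
      (1 / 2 : ℝ) * (ustar ⬝ᵥ M.mulVec ustar) + q ⬝ᵥ ustar ≤
        (1 / 2 : ℝ) * (u ⬝ᵥ M.mulVec u) + q ⬝ᵥ u := by
  intro u hu
  refine quadratic_le_of_posSemidef_add_smul_one hpsd heq ?_
  rw [← EuclideanSpace.real_norm_sq_eq_dotProduct, ← EuclideanSpace.real_norm_sq_eq_dotProduct]
  rcases hα.eq_or_lt with rfl | hpos
  · simp
  · rw [hbdry hpos]
    gcongr

/-- Sufficiency in the trust-region (QP1QC) optimality characterization: if
`H + α* I` is positive semidefinite, `(H + α* I) u* = -q`, `‖u*‖ ≤ Δ`, and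
`‖u*‖ = Δ` whenever `α* > 0` (with `α* ≥ 0`), then `u*` minimizes
`ψ(u) = ½ uᵀ H u + qᵀ u` over the ball `{u : ‖u‖ ≤ Δ}`. -/
theorem trust_region_sufficiency {T : ℕ} (M : Matrix (Fin T) (Fin T) ℝ)
    (hM : M.IsSymm) (q : EuclideanSpace ℝ (Fin T)) (Δ : ℝ) (hΔ : 0 < Δ)
    (ustar : EuclideanSpace ℝ (Fin T)) (αstar : ℝ) (hα : 0 ≤ αstar)
    (hpsd : (M + αstar • (1 : Matrix (Fin T) (Fin T) ℝ)).PosSemidef)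
    (heq : (M + αstar • (1 : Matrix (Fin T) (Fin T) ℝ)).mulVec ustar = -q)
    (hball : ‖ustar‖ ≤ Δ) (hbdry : 0 < αstar → ‖ustar‖ = Δ) :
    ∀ u : EuclideanSpace ℝ (Fin T), ‖u‖ ≤ Δ →
      (1 / 2 : ℝ) * (ustar ⬝ᵥ M.mulVec ustar) + q ⬝ᵥ ustar ≤
        (1 / 2 : ℝ) * (u ⬝ᵥ M.mulVec u) + q ⬝ᵥ u :=
  trust_region_sufficiency_general M q Δ ustar αstar hα hpsd heq hbdry
end
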